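/- arXiv:2401.01714 — 4 statements merged into one kernel-verified Lean document; each statement's English description precedes it below -/
import Mathlib

section
/- If S₁ is an η₁-sparse family of dyadic cubes and S₂ is an η₂-sparse family of dyadic cubes (both contained in the dyadic descendants of a cube Q₀), then S₁ ∪ S₂ is an (η₁η₂/(η₁+η₂))-sparse family. -/
open MeasureTheory

def IsCarleson {α : Type*} [MeasurableSpace α] (μ : Measure α) (𝒟 S : Set (Set α))
    (C : ENNReal) : Prop :=
  ∀ Q ∈ 𝒟, ∑' P : {P : Set α // P ∈ S ∧ P ⊆ Q}, μ (P : Set α) ≤ C * μ Q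

theorem IsCarleson.union {α : Type*} [MeasurableSpace α] {μ : Measure α}
    {𝒟 S₁ S₂ : Set (Set α)} {C₁ C₂ : ENNReal}
    (h₁ : IsCarleson μ 𝒟 S₁ C₁) (h₂ : IsCarleson μ 𝒟 S₂ C₂) :
    IsCarleson μ 𝒟 (S₁ ∪ S₂) (C₁ + C₂) := by
  intro Q hQ
  -- The index type `{P // P ∈ S ∧ P ⊆ Q}` is definitionally `↥(S ∩ Set.Iic Q)`.
  calc ∑' P : ↥((S₁ ∪ S₂) ∩ Set.Iic Q), μ (P : Set α)
      = ∑' P : ↥(S₁ ∩ Set.Iic Q ∪ S₂ ∩ Set.Iic Q), μ (P : Set α) := by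
        rw [Set.union_inter_distrib_right]
    _ ≤ ∑' P : ↥(S₁ ∩ Set.Iic Q), μ (P : Set α) + ∑' P : ↥(S₂ ∩ Set.Iic Q), μ (P : Set α) :=
        ENNReal.tsum_union_le _ _ _
    _ ≤ C₁ * μ Q + C₂ * μ Q := add_le_add (h₁ Q hQ) (h₂ Q hQ)
    _ = (C₁ + C₂) * μ Q := (add_mul _ _ _).symm

lemma one_div_mul_div_add {a b : ℝ} (ha : a ≠ 0) (hb : b ≠ 0) :
    1 / (a * b / (a + b)) = 1 / a + 1 / b := by
  field_simp
  ring

theorem stmt_0_general {α : Type*} [MeasurableSpace α] (μ : Measure α)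
    (𝒟 S₁ S₂ : Set (Set α)) (η₁ η₂ : ℝ)
    (hη₁ : 0 < η₁) (hη₂ : 0 < η₂)
    (hC₁ : ∀ Q ∈ 𝒟, ∑' P : {P : Set α // P ∈ S₁ ∧ P ⊆ Q}, μ (P : Set α)
      ≤ ENNReal.ofReal (1 / η₁) * μ Q)
    (hC₂ : ∀ Q ∈ 𝒟, ∑' P : {P : Set α // P ∈ S₂ ∧ P ⊆ Q}, μ (P : Set α)
      ≤ ENNReal.ofReal (1 / η₂) * μ Q) :
    ∀ Q ∈ 𝒟, ∑' P : {P : Set α // P ∈ S₁ ∪ S₂ ∧ P ⊆ Q}, μ (P : Set α)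
      ≤ ENNReal.ofReal (1 / (η₁ * η₂ / (η₁ + η₂))) * μ Q := by
  have hC : ENNReal.ofReal (1 / (η₁ * η₂ / (η₁ + η₂)))
      = ENNReal.ofReal (1 / η₁) + ENNReal.ofReal (1 / η₂) := by
    rw [one_div_mul_div_add hη₁.ne' hη₂.ne', ENNReal.ofReal_add (by positivity) (by positivity)]
  rw [hC]
  exact IsCarleson.union hC₁ hC₂

/-- **Union of sparse families.** If `S₁` is `η₁`-sparse (equivalently `1/η₁`-Carleson) and
`S₂` is `η₂`-sparse, both consisting of dyadic descendants of a cube `Q₀` (the lattice `𝒟`),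
then `S₁ ∪ S₂` is `η₁η₂/(η₁+η₂)`-sparse, i.e. `(η₁+η₂)/(η₁η₂)`-Carleson. -/
theorem stmt_0 {α : Type*} [MeasurableSpace α] (μ : Measure α)
    (𝒟 S₁ S₂ : Set (Set α)) (η₁ η₂ : ℝ)
    (hη₁ : 0 < η₁) (hη₁' : η₁ < 1) (hη₂ : 0 < η₂) (hη₂' : η₂ < 1)
    (hS₁ : S₁ ⊆ 𝒟) (hS₂ : S₂ ⊆ 𝒟)
    (hC₁ : ∀ Q ∈ 𝒟, ∑' P : {P : Set α // P ∈ S₁ ∧ P ⊆ Q}, μ (P : Set α)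
      ≤ ENNReal.ofReal (1 / η₁) * μ Q)
    (hC₂ : ∀ Q ∈ 𝒟, ∑' P : {P : Set α // P ∈ S₂ ∧ P ⊆ Q}, μ (P : Set α)
      ≤ ENNReal.ofReal (1 / η₂) * μ Q) :
    ∀ Q ∈ 𝒟, ∑' P : {P : Set α // P ∈ S₁ ∪ S₂ ∧ P ⊆ Q}, μ (P : Set α)
      ≤ ENNReal.ofReal (1 / (η₁ * η₂ / (η₁ + η₂))) * μ Q :=
  stmt_0_general μ 𝒟 S₁ S₂ η₁ η₂ hη₁ hη₂ hC₁ hC₂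
end

section
/- Let Φ₀, Φ₁, ..., Φₘ be continuous, nonnegative, strictly increasing functions on [0,∞) with Φᵢ(0)=0 and lim_{t→∞} Φᵢ(t)=∞, satisfying Φ₁⁻¹(t)·Φ₂⁻¹(t)···Φₘ⁻¹(t) ≤ D·Φ₀⁻¹(t) for all t ≥ 0. Then for all nonnegative real numbers x₁, ..., xₘ, Φ₀(x₁x₂···xₘ/D) ≤ Φ₁(x₁) + Φ₂(x₂) + ··· + Φₘ(xₘ). -/
/-! With `t = Φ₁(x₁) + ⋯ + Φₘ(xₘ)` each `Φᵢ(xᵢ) ≤ t`, so `xᵢ ≤ Φᵢ⁻¹(t)`; multiplying and using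
the hypothesis gives `x₁⋯xₘ / D ≤ Φ₀⁻¹(t)`, and applying the increasing `Φ₀` yields the claim. -/

theorem StrictMonoOn.le_of_apply_le_apply_eq {f : ℝ → ℝ} {s : Set ℝ} (hf : StrictMonoOn f s)
    {x y t : ℝ} (hx : x ∈ s) (hy : y ∈ s) (hfy : f y = t) (hfx : f x ≤ t) : x ≤ y :=
  (hf.le_iff_le hx hy).1 (hfy ▸ hfx)

theorem stmt_1_general (m : ℕ) (D : ℝ) (hD : 0 < D)
    (Φ₀ : ℝ → ℝ) (Φ : Fin m → ℝ → ℝ) (Ψ₀ : ℝ → ℝ) (Ψ : Fin m → ℝ → ℝ)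
    (hΦ₀mono : StrictMonoOn Φ₀ (Set.Ici 0))
    (hΦmono : ∀ i, StrictMonoOn (Φ i) (Set.Ici 0))
    (hΦnonneg : ∀ i, ∀ t ≥ (0:ℝ), 0 ≤ Φ i t)
    (hΨ₀ : ∀ t ≥ (0:ℝ), 0 ≤ Ψ₀ t ∧ Φ₀ (Ψ₀ t) = t ∧ Ψ₀ (Φ₀ t) = t)
    (hΨ : ∀ i, ∀ t ≥ (0:ℝ), 0 ≤ Ψ i t ∧ Φ i (Ψ i t) = t ∧ Ψ i (Φ i t) = t)
    (hprod : ∀ t ≥ (0:ℝ), (∏ i, Ψ i t) ≤ D * Ψ₀ t) :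
    ∀ x : Fin m → ℝ, (∀ i, 0 ≤ x i) →
      Φ₀ ((∏ i, x i) / D) ≤ ∑ i, Φ i (x i) := by
  intro x hx
  set t := ∑ i, Φ i (x i)
  have hΦx : ∀ i, 0 ≤ Φ i (x i) := fun i => hΦnonneg i (x i) (hx i)
  have ht : 0 ≤ t := Finset.sum_nonneg fun i _ => hΦx i
  have hx_le : ∀ i, x i ≤ Ψ i t := fun i =>
    (hΦmono i).le_of_apply_le_apply_eq (hx i) (hΨ i t ht).1 (hΨ i t ht).2.1
      (Finset.single_le_sum (fun j _ => hΦx j) (Finset.mem_univ i))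
  have hprod_le : (∏ i, x i) / D ≤ Ψ₀ t := by
    rw [div_le_iff₀' hD]
    exact (Finset.prod_le_prod (fun i _ => hx i) fun i _ => hx_le i).trans (hprod t ht)
  have hprod_nonneg : 0 ≤ (∏ i, x i) / D :=
    div_nonneg (Finset.prod_nonneg fun i _ => hx i) hD.le
  calc Φ₀ ((∏ i, x i) / D) ≤ Φ₀ (Ψ₀ t) :=
        hΦ₀mono.monotoneOn hprod_nonneg (hΨ₀ t ht).1 hprod_le
    _ = t := (hΨ₀ t ht).2.1

/-- Pointwise Young-type inequality: if `Φ₁⁻¹(t)⋯Φₘ⁻¹(t) ≤ D Φ₀⁻¹(t)` for `t ≥ 0`,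
where the `Φᵢ` are continuous, nonnegative, strictly increasing on `[0,∞)` with
`Φᵢ(0) = 0` and `Φᵢ(t) → ∞`, then `Φ₀(x₁⋯xₘ/D) ≤ Φ₁(x₁) + ⋯ + Φₘ(xₘ)` for
nonnegative `x₁, …, xₘ`.  The inverses are represented by functions `Ψᵢ`. -/
theorem stmt_1 (m : ℕ) (D : ℝ) (hD : 0 < D)
    (Φ₀ : ℝ → ℝ) (Φ : Fin m → ℝ → ℝ) (Ψ₀ : ℝ → ℝ) (Ψ : Fin m → ℝ → ℝ)
    (hΦ₀cont : ContinuousOn Φ₀ (Set.Ici 0))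
    (hΦ₀mono : StrictMonoOn Φ₀ (Set.Ici 0))
    (hΦ₀nonneg : ∀ t ≥ (0:ℝ), 0 ≤ Φ₀ t)
    (hΦ₀zero : Φ₀ 0 = 0)
    (hΦ₀top : Filter.Tendsto Φ₀ Filter.atTop Filter.atTop)
    (hΦcont : ∀ i, ContinuousOn (Φ i) (Set.Ici 0))
    (hΦmono : ∀ i, StrictMonoOn (Φ i) (Set.Ici 0))
    (hΦnonneg : ∀ i, ∀ t ≥ (0:ℝ), 0 ≤ Φ i t)
    (hΦzero : ∀ i, Φ i 0 = 0)
    (hΦtop : ∀ i, Filter.Tendsto (Φ i) Filter.atTop Filter.atTop)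
    (hΨ₀ : ∀ t ≥ (0:ℝ), 0 ≤ Ψ₀ t ∧ Φ₀ (Ψ₀ t) = t ∧ Ψ₀ (Φ₀ t) = t)
    (hΨ : ∀ i, ∀ t ≥ (0:ℝ), 0 ≤ Ψ i t ∧ Φ i (Ψ i t) = t ∧ Ψ i (Φ i t) = t)
    (hprod : ∀ t ≥ (0:ℝ), (∏ i, Ψ i t) ≤ D * Ψ₀ t) :
    ∀ x : Fin m → ℝ, (∀ i, 0 ≤ x i) →
      Φ₀ ((∏ i, x i) / D) ≤ ∑ i, Φ i (x i) :=
  stmt_1_general m D hD Φ₀ Φ Ψ₀ Ψ hΦ₀mono hΦmono hΦnonneg hΨ₀ hΨ hprod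
end

section
/- For x ≥ 0 and t > 0 let φ_t(x) = e^{x^t} - 1 and Φ_{1/s}(x) = x(log(e+x))^{1/s}, where 1/s = 1/s₁ + ··· + 1/sₘ with s₁, ..., sₘ ≥ 1. Then φ_{s₁}⁻¹(x)·φ_{s₂}⁻¹(x)···φ_{sₘ}⁻¹(x)·Φ_{1/s}⁻¹(x) ≤ 2^{1/s}(1+1/s)^{1/s} x for all x ≥ 0. -/
/-!
Write `y = Φ_{1/s}⁻¹(x)` and `L = log(e + y) ≥ 1`, so that `x = y L^r` with `r = 1/s`. Since
`x + 1 ≤ (e + y)(1 + L^r)` and `log(1 + L^r) ≤ log 2 + r log L ≤ (1 + r) L`, we get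
`log(x + 1) ≤ 2(1 + r) L`. The product of the `φ_{sᵢ}⁻¹(x)` is `log(x + 1)^r`, hence it is at most
`(2(1 + r))^r L^r`, and multiplying by `y` turns `L^r y` back into `x`.
-/

open Real

lemma one_le_log_exp_one_add {y : ℝ} (hy : 0 ≤ y) : 1 ≤ log (exp 1 + y) := by
  rw [le_log_iff_exp_le (by positivity)]
  linarith

lemma log_one_add_rpow_le {L r : ℝ} (hL : 1 ≤ L) (hr : 0 ≤ r) :
    log (1 + L ^ r) ≤ (1 + r) * L := by
  have hLr : 1 ≤ L ^ r := one_le_rpow hL hr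
  calc log (1 + L ^ r) ≤ log (2 * L ^ r) := log_le_log (by positivity) (by linarith)
    _ = log 2 + r * log L := by
      rw [log_mul two_ne_zero (by positivity), log_rpow (by positivity)]
    _ ≤ 1 + r * L := by
      gcongr
      · linarith [log_le_sub_one_of_pos (two_pos : (0 : ℝ) < 2)]
      · exact log_le_self (by positivity)
    _ ≤ (1 + r) * L := by nlinarith

lemma log_mul_log_rpow_add_one_le {y r : ℝ} (hy : 0 ≤ y) (hr : 0 ≤ r) :
    log (y * log (exp 1 + y) ^ r + 1) ≤ 2 * (1 + r) * log (exp 1 + y) := by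
  set L := log (exp 1 + y)
  have hL : 1 ≤ L := one_le_log_exp_one_add hy
  have hLr : 1 ≤ L ^ r := one_le_rpow hL hr
  have he : 1 ≤ exp 1 := one_le_exp zero_le_one
  calc log (y * L ^ r + 1) ≤ log ((exp 1 + y) * (1 + L ^ r)) :=
        log_le_log (by positivity) (by nlinarith)
    _ = L + log (1 + L ^ r) := log_mul (by positivity) (by positivity)
    _ ≤ L + (1 + r) * L := by gcongr; exact log_one_add_rpow_le hL hr
    _ ≤ 2 * (1 + r) * L := by nlinarith

lemma log_add_one_rpow_mul_le {y r : ℝ} (hy : 0 ≤ y) (hr : 0 ≤ r) :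
    log (y * log (exp 1 + y) ^ r + 1) ^ r * y
      ≤ 2 ^ r * (1 + r) ^ r * (y * log (exp 1 + y) ^ r) := by
  have hL : 0 ≤ log (exp 1 + y) := zero_le_one.trans (one_le_log_exp_one_add hy)
  have hlog : 0 ≤ log (y * log (exp 1 + y) ^ r + 1) := log_nonneg (le_add_of_nonneg_left (by positivity))
  calc log (y * log (exp 1 + y) ^ r + 1) ^ r * y
      ≤ (2 * (1 + r) * log (exp 1 + y)) ^ r * y := by
        gcongr
        exact log_mul_log_rpow_add_one_le hy hr
    _ = 2 ^ r * (1 + r) ^ r * (y * log (exp 1 + y) ^ r) := by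
        rw [mul_rpow (by positivity) hL, mul_rpow zero_le_two (by positivity)]
        ring

theorem stmt_4_general (m : ℕ) (s : Fin m → ℝ) (hs : ∀ i, 1 ≤ s i)
    (r : ℝ) (hr : r = ∑ i, 1 / s i) (Ψ : ℝ → ℝ)
    (hinv : ∀ x ≥ (0:ℝ), 0 ≤ Ψ x ∧ Ψ x * Real.log (Real.exp 1 + Ψ x) ^ r = x ∧
      Ψ (x * Real.log (Real.exp 1 + x) ^ r) = x) :
    ∀ x ≥ (0:ℝ),
      (∏ i, Real.log (x + 1) ^ (1 / s i)) * Ψ x ≤ (2:ℝ) ^ r * (1 + r) ^ r * x := by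
  have hexp : ∀ i ∈ Finset.univ, 0 ≤ 1 / s i := fun i _ =>
    (one_div_pos.2 (zero_lt_one.trans_le (hs i))).le
  have hr0 : 0 ≤ r := hr ▸ Finset.sum_nonneg hexp
  intro x hx
  obtain ⟨hΨ0, hΨx, -⟩ := hinv x hx
  rw [← rpow_sum_of_nonneg (log_nonneg (by linarith)) hexp, ← hr]
  simpa only [hΨx] using log_add_one_rpow_mul_le hΨ0 hr0

/-- With `φ_t⁻¹(x) = (log(x+1))^{1/t}` and `Φ_{1/s}⁻¹` the inverse of
`Φ_{1/s}(x) = x (log(e+x))^{1/s}`, where `1/s = 1/s₁ + ⋯ + 1/sₘ` with `sᵢ ≥ 1`, one has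
`φ_{s₁}⁻¹(x)⋯φ_{sₘ}⁻¹(x)·Φ_{1/s}⁻¹(x) ≤ 2^{1/s}(1+1/s)^{1/s} x` for all `x ≥ 0`.
Here `r` denotes `1/s`. -/
theorem stmt_4 (m : ℕ) (hm : 1 ≤ m) (s : Fin m → ℝ) (hs : ∀ i, 1 ≤ s i)
    (r : ℝ) (hr : r = ∑ i, 1 / s i) (Ψ : ℝ → ℝ)
    (hinv : ∀ x ≥ (0:ℝ), 0 ≤ Ψ x ∧ Ψ x * Real.log (Real.exp 1 + Ψ x) ^ r = x ∧
      Ψ (x * Real.log (Real.exp 1 + x) ^ r) = x) :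
    ∀ x ≥ (0:ℝ),
      (∏ i, Real.log (x + 1) ^ (1 / s i)) * Ψ x ≤ (2:ℝ) ^ r * (1 + r) ^ r * x :=
  stmt_4_general m s hs r hr Ψ hinv
end

section
/- Let η ∈ (0,1) and let S be an η-sparse family of dyadic cubes. Then there exist constants c, α > 0 (depending only on η) such that for every dyadic cube Q and every t > 0, |{x ∈ Q : Σ_{Q' ∈ S, Q' ⊆ Q} χ_{Q'}(x) > t}| ≤ c e^{-αt} |Q|. -/
/-! The disjoint major subsets give the packing bound `η ∑_{P ∈ S, P ⊆ R} μ P ≤ μ R` for every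
`R`; iterating it, the number of chains `Q ⊇ P₁ ⊇ ⋯ ⊇ Pₖ` in `S` whose last cube contains `x`
has integral at most `η⁻ᵏ μ Q`. Since the cubes of `S` are nested or disjoint, those containing a
given `x` form a chain; if `x` lies in `m k` of them inside `Q`, each of the `m` largest has
`m (k - 1)` of the others below it, so `x` lies in the last cube of at least `mᵏ` such chains.
Chebyshev then gives `μ {x ∈ Q | m k < ∑ χ_P x} ≤ (η m)⁻ᵏ μ Q`, and `m = ⌈2 / η⌉` turns this
into decay `2⁻ᵏ`. -/

open MeasureTheory ENNReal Set

theorem IsChain.exists_upper_finset {β : Type*} [PartialOrder β] [DecidableEq β] {F : Finset β}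
    (hF : IsChain (· ≤ ·) (F : Set β)) {j : ℕ} (hj : j ≤ F.card) :
    ∃ M ⊆ F, M.card = j ∧ ∀ a ∈ F \ M, ∀ b ∈ M, a ≤ b := by
  induction j with
  | zero => exact ⟨∅, by simp⟩
  | succ j ih =>
    obtain ⟨M, hMF, hMcard, hM⟩ := ih (by omega)
    have hne : (F \ M).Nonempty := by
      rw [← Finset.card_pos, Finset.card_sdiff_of_subset hMF]
      omega
    obtain ⟨c, hc⟩ := Finset.exists_maximal hne
    obtain ⟨hcF, hcM⟩ := Finset.mem_sdiff.1 hc.prop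
    refine ⟨insert c M, Finset.insert_subset hcF hMF,
      by rw [Finset.card_insert_of_notMem hcM, hMcard], fun a ha b hb => ?_⟩
    have ha' : a ∈ F \ M := by grind
    rcases Finset.mem_insert.1 hb with rfl | hb
    · exact (hF.total (Finset.mem_sdiff.1 ha').1 hcF).elim id (hc.le_of_ge ha')
    · exact hM a ha' b hb

theorem exists_finset_of_natCast_lt_tsum_indicator {α : Type*} {p : Set α → Prop} {x : α} {n : ℕ}
    (h : (n : ℝ≥0∞) < ∑' P : {P // p P}, (P : Set α).indicator (fun _ => 1) x) :
    ∃ F : Finset (Set α), F.card = n ∧ ∀ P ∈ F, p P ∧ x ∈ P := by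
  have hcount : ∑' P : {P // p P}, (P : Set α).indicator (fun _ => (1 : ℝ≥0∞)) x
      = {P | p P ∧ x ∈ P}.encard :=
    calc ∑' P : {P // p P}, (P : Set α).indicator (fun _ => (1 : ℝ≥0∞)) x
        = ∑' P, {P | p P}.indicator (fun P : Set α => P.indicator (fun _ => 1) x) P :=
          tsum_subtype {P | p P} (fun P : Set α => P.indicator (fun _ => (1 : ℝ≥0∞)) x)
      _ = ∑' P, {P | p P ∧ x ∈ P}.indicator 1 P := by
          congr 1; ext P
          by_cases hP : p P <;> by_cases hx : x ∈ P <;> simp [hP, hx]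
      _ = {P | p P ∧ x ∈ P}.encard := by rw [← tsum_subtype]; exact tsum_set_one _
  have hn : (n : ℕ∞) ≤ {P | p P ∧ x ∈ P}.encard := by
    rw [← ENat.toENNReal_le, ← hcount]
    simpa using h.le
  obtain ⟨T, hT, hTcard⟩ := exists_subset_encard_eq hn
  obtain ⟨F, rfl⟩ := (finite_of_encard_eq_coe hTcard).exists_finset_coe
  exact ⟨F, by simpa using hTcard, fun P hP => hT hP⟩

section ChainCount

variable {α : Type*}

/-- `chainCount S k R x` counts the chains `R ⊇ P₁ ⊇ ⋯ ⊇ Pₖ` with `Pᵢ ∈ S` and `x ∈ Pₖ`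
(repetitions allowed). -/
noncomputable def chainCount (S : Set (Set α)) : ℕ → Set α → α → ℝ≥0∞
  | 0, R => R.indicator fun _ => 1
  | k + 1, R => fun x => ∑' P : {P // P ∈ S ∧ P ⊆ R}, chainCount S k P x

variable {S : Set (Set α)}

theorem pow_le_chainCount (hnest : ∀ P ∈ S, ∀ Q ∈ S, P ⊆ Q ∨ Q ⊆ P ∨ Disjoint P Q)
    {x : α} {m : ℕ} : ∀ (k : ℕ) {R : Set α} {F : Finset (Set α)}, x ∈ R →
      (∀ P ∈ F, (P ∈ S ∧ P ⊆ R) ∧ x ∈ P) → m * k ≤ F.card → (m : ℝ≥0∞) ^ k ≤ chainCount S k R x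
  | 0, R, F, hxR, _, _ => by simp [chainCount, hxR]
  | k + 1, R, F, hxR, hF, hcard => by
    classical
    have hchain : IsChain (· ≤ ·) (F : Set (Set α)) := by
      intro P hP Q hQ _
      rcases hnest P (hF P hP).1.1 Q (hF Q hQ).1.1 with h | h | h
      · exact Or.inl h
      · exact Or.inr h
      · exact absurd h (not_disjoint_iff.2 ⟨x, (hF P hP).2, (hF Q hQ).2⟩)
    obtain ⟨M, hMF, hMcard, hMabove⟩ := hchain.exists_upper_finset (j := m)
      ((Nat.le_mul_of_pos_right m k.succ_pos).trans hcard)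
    have hbelow : ∀ P ∈ M, (m : ℝ≥0∞) ^ k ≤ chainCount S k P x := fun P hP =>
      pow_le_chainCount hnest k (hF P (hMF hP)).2
        (fun Q hQ => ⟨⟨(hF Q (Finset.sdiff_subset hQ)).1.1, hMabove Q hQ P hP⟩,
          (hF Q (Finset.sdiff_subset hQ)).2⟩)
        (by rw [Finset.card_sdiff_of_subset hMF, hMcard]; rw [Nat.mul_succ] at hcard; omega)
    calc (m : ℝ≥0∞) ^ (k + 1) = ∑ _P ∈ M, (m : ℝ≥0∞) ^ k := by
          rw [Finset.sum_const, hMcard, nsmul_eq_mul, pow_succ, mul_comm]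
      _ ≤ ∑ P ∈ M, chainCount S k P x := Finset.sum_le_sum hbelow
      _ = ∑ P ∈ M.subtype (fun P => P ∈ S ∧ P ⊆ R), chainCount S k P x :=
          (Finset.sum_subtype_of_mem _ fun P hP => (hF P (hMF hP)).1).symm
      _ ≤ chainCount S (k + 1) R x := ENNReal.sum_le_tsum _

variable [MeasurableSpace α] {μ : Measure α}

theorem measurable_chainCount (hSc : S.Countable) (hSm : ∀ P ∈ S, MeasurableSet P) :
    ∀ (k : ℕ) {R : Set α}, MeasurableSet R → Measurable (chainCount S k R)
  | 0, _, hR => measurable_const.indicator hR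
  | k + 1, R, _ => by
    have : Countable {P // P ∈ S ∧ P ⊆ R} := (hSc.mono fun _ hP => hP.1).to_subtype
    exact Measurable.tsum fun P => measurable_chainCount hSc hSm k (hSm _ P.2.1)

theorem mul_tsum_measure_le_of_sparse {η : ℝ≥0∞} {E : Set α → Set α}
    (hE : ∀ P ∈ S, E P ⊆ P ∧ MeasurableSet (E P) ∧ η * μ P ≤ μ (E P))
    (hdisj : S.Pairwise fun P Q => Disjoint (E P) (E Q)) (R : Set α) :
    η * ∑' P : {P // P ∈ S ∧ P ⊆ R}, μ P ≤ μ R :=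
  calc η * ∑' P : {P // P ∈ S ∧ P ⊆ R}, μ P = ∑' P : {P // P ∈ S ∧ P ⊆ R}, η * μ P :=
        ENNReal.tsum_mul_left.symm
    _ ≤ ∑' P : {P // P ∈ S ∧ P ⊆ R}, μ (E P) := ENNReal.tsum_le_tsum fun P => (hE P P.2.1).2.2
    _ ≤ μ (⋃ P : {P // P ∈ S ∧ P ⊆ R}, E P) :=
        tsum_meas_le_meas_iUnion_of_disjoint μ (fun P => (hE P P.2.1).2.1)
          fun P Q hPQ => hdisj P.2.1 Q.2.1 (Subtype.coe_injective.ne hPQ)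
    _ ≤ μ R := measure_mono (iUnion_subset fun P => (hE P P.2.1).1.trans P.2.2)

theorem pow_mul_lintegral_chainCount_le (hSc : S.Countable) (hSm : ∀ P ∈ S, MeasurableSet P)
    {η : ℝ≥0∞} (hpack : ∀ R, η * ∑' P : {P // P ∈ S ∧ P ⊆ R}, μ P ≤ μ R) :
    ∀ (k : ℕ) (R : Set α), η ^ k * ∫⁻ x, chainCount S k R x ∂μ ≤ μ R
  | 0, R => by rw [pow_zero, one_mul]; exact lintegral_indicator_one_le R
  | k + 1, R => by
    have : Countable {P // P ∈ S ∧ P ⊆ R} := (hSc.mono fun _ hP => hP.1).to_subtype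
    calc η ^ (k + 1) * ∫⁻ x, chainCount S (k + 1) R x ∂μ
        = η * ∑' P : {P // P ∈ S ∧ P ⊆ R}, η ^ k * ∫⁻ x, chainCount S k P x ∂μ := by
          rw [chainCount, lintegral_tsum fun P =>
              (measurable_chainCount hSc hSm k (hSm _ P.2.1)).aemeasurable,
            ENNReal.tsum_mul_left, pow_succ', mul_assoc]
      _ ≤ η * ∑' P : {P // P ∈ S ∧ P ⊆ R}, μ P := by
          gcongr with P
          exact pow_mul_lintegral_chainCount_le hSc hSm hpack k P
      _ ≤ μ R := hpack R

theorem pow_mul_measure_lt_chainCount_one_le (hSc : S.Countable)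
    (hSm : ∀ P ∈ S, MeasurableSet P) (hnest : ∀ P ∈ S, ∀ Q ∈ S, P ⊆ Q ∨ Q ⊆ P ∨ Disjoint P Q)
    {η : ℝ≥0∞} (hpack : ∀ R, η * ∑' P : {P // P ∈ S ∧ P ⊆ R}, μ P ≤ μ R)
    {Q : Set α} (hQ : MeasurableSet Q) (m j : ℕ) :
    (η * m) ^ j * μ {x ∈ Q | ((m * j : ℕ) : ℝ≥0∞) < chainCount S 1 Q x} ≤ μ Q := by
  have hlevel : {x ∈ Q | ((m * j : ℕ) : ℝ≥0∞) < chainCount S 1 Q x}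
      ⊆ {x | (m : ℝ≥0∞) ^ j ≤ chainCount S j Q x} := by
    rintro x ⟨hxQ, hx⟩
    obtain ⟨F, hFcard, hF⟩ := exists_finset_of_natCast_lt_tsum_indicator hx
    exact pow_le_chainCount hnest j hxQ hF hFcard.ge
  calc (η * m) ^ j * μ {x ∈ Q | ((m * j : ℕ) : ℝ≥0∞) < chainCount S 1 Q x}
      ≤ η ^ j * ((m : ℝ≥0∞) ^ j * μ {x | (m : ℝ≥0∞) ^ j ≤ chainCount S j Q x}) := by
        rw [mul_pow, mul_assoc]
        gcongr
    _ ≤ η ^ j * ∫⁻ x, chainCount S j Q x ∂μ := by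
        gcongr
        exact mul_meas_ge_le_lintegral₀ (measurable_chainCount hSc hSm j hQ).aemeasurable _
    _ ≤ μ Q := pow_mul_lintegral_chainCount_le hSc hSm hpack j Q

end ChainCount

theorem one_le_two_mul_exp_mul_two_pow_floor (m t : ℝ) :
    1 ≤ 2 * Real.exp (-(Real.log 2 / m) * t) * 2 ^ ⌊t / m⌋₊ := by
  have hfloor : t / m < ⌊t / m⌋₊ + 1 := Nat.lt_floor_add_one _
  have hlog : 0 < Real.log 2 := Real.log_pos one_lt_two
  rw [← Real.rpow_natCast, Real.rpow_def_of_pos two_pos]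
  nth_rewrite 1 [← Real.exp_log two_pos]
  rw [← Real.exp_add, ← Real.exp_add]
  apply Real.one_le_exp
  have : Real.log 2 + -(Real.log 2 / m) * t + Real.log 2 * ⌊t / m⌋₊
      = Real.log 2 * (⌊t / m⌋₊ + 1 - t / m) := by ring
  rw [this]
  exact mul_nonneg hlog.le (by linarith)

theorem le_ofReal_two_mul_exp_mul_of_two_pow_floor_mul_le {A B : ℝ≥0∞} (m t : ℝ)
    (h : 2 ^ ⌊t / m⌋₊ * A ≤ B) :
    A ≤ ENNReal.ofReal (2 * Real.exp (-(Real.log 2 / m) * t)) * B := by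
  set c := ENNReal.ofReal (2 * Real.exp (-(Real.log 2 / m) * t))
  have hc : 1 ≤ c * 2 ^ ⌊t / m⌋₊ := by
    rw [← ENNReal.ofReal_ofNat, ← ENNReal.ofReal_pow zero_le_two,
      ← ENNReal.ofReal_mul (by positivity), ← ENNReal.ofReal_one]
    exact ENNReal.ofReal_le_ofReal (one_le_two_mul_exp_mul_two_pow_floor m t)
  calc A ≤ c * 2 ^ ⌊t / m⌋₊ * A := le_mul_of_one_le_left' hc
    _ = c * (2 ^ ⌊t / m⌋₊ * A) := mul_assoc _ _ _
    _ ≤ c * B := by gcongr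

theorem stmt_19_general {α : Type*} [MeasurableSpace α] (μ : Measure α)
    (η : ℝ) (hη : 0 < η)
    (𝒟 : Set (Set α))
    (h𝒟meas : ∀ Q ∈ 𝒟, MeasurableSet Q)
    (h𝒟nested : ∀ P ∈ 𝒟, ∀ Q ∈ 𝒟, P ⊆ Q ∨ Q ⊆ P ∨ Disjoint P Q)
    (S : Set (Set α)) (hS : S ⊆ 𝒟) (hScount : S.Countable)
    (E : Set α → Set α)
    (hE : ∀ Q ∈ S, E Q ⊆ Q ∧ MeasurableSet (E Q) ∧ ENNReal.ofReal η * μ Q ≤ μ (E Q))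
    (hdisj : S.Pairwise fun P Q => Disjoint (E P) (E Q)) :
    ∃ c a : ℝ, 0 < c ∧ 0 < a ∧ ∀ Q ∈ 𝒟, ∀ t : ℝ, 0 < t →
      μ {x ∈ Q | ENNReal.ofReal t <
          ∑' P : {P : Set α // P ∈ S ∧ P ⊆ Q},
            (P : Set α).indicator (fun _ => (1 : ENNReal)) x} ≤
        ENNReal.ofReal (c * Real.exp (-a * t)) * μ Q := by
  set m := ⌈2 / η⌉₊
  have hmη : 2 ≤ (m : ℝ) * η := by
    calc (2 : ℝ) = 2 / η * η := by field_simp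
      _ ≤ m * η := by gcongr; exact Nat.le_ceil _
  have hm : 0 < (m : ℝ) := Nat.cast_pos.2 (Nat.ceil_pos.2 (by positivity))
  refine ⟨2, Real.log 2 / m, two_pos, div_pos (Real.log_pos one_lt_two) hm,
    fun Q hQ t ht => ?_⟩
  set j := ⌊t / m⌋₊
  have hmj : ((m * j : ℕ) : ℝ≥0∞) ≤ ENNReal.ofReal t := by
    rw [← ENNReal.ofReal_natCast]
    gcongr
    push_cast
    rw [mul_comm, ← le_div_iff₀ hm]
    exact Nat.floor_le (by positivity)
  have htwo : (2 : ℝ≥0∞) ^ j ≤ (ENNReal.ofReal η * m) ^ j := by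
    gcongr
    rw [← ENNReal.ofReal_natCast, ← ENNReal.ofReal_mul hη.le, ← ENNReal.ofReal_ofNat]
    exact ENNReal.ofReal_le_ofReal (by linarith)
  have hdecay := pow_mul_measure_lt_chainCount_one_le hScount (fun P hP => h𝒟meas P (hS hP))
    (fun P hP P' hP' => h𝒟nested P (hS hP) P' (hS hP')) (mul_tsum_measure_le_of_sparse hE hdisj)
    (h𝒟meas Q hQ) m j
  calc _ ≤ μ {x ∈ Q | ((m * j : ℕ) : ℝ≥0∞) < chainCount S 1 Q x} :=
        measure_mono fun x hx => ⟨hx.1, hmj.trans_lt hx.2⟩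
    _ ≤ _ := le_ofReal_two_mul_exp_mul_of_two_pow_floor_mul_le m t
        ((mul_le_mul_left htwo _).trans hdecay)

/-- Exponential decay for the counting function of an `η`-sparse family of dyadic cubes:
there exist `c, a > 0` depending only on `η` such that for every dyadic cube `Q` and
`t > 0`, `|{x ∈ Q : Σ_{Q'∈S, Q'⊆Q} χ_{Q'}(x) > t}| ≤ c e^{-a t} |Q|`.  The dyadic
lattice `𝒟` is axiomatized by the nested-or-disjoint property, and sparseness by the
existence of pairwise disjoint major subsets `E Q ⊆ Q` with `|E Q| ≥ η |Q|`. -/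
theorem stmt_19 {α : Type*} [MeasurableSpace α] (μ : Measure α)
    (η : ℝ) (hη : 0 < η) (hη1 : η < 1)
    (𝒟 : Set (Set α))
    (h𝒟meas : ∀ Q ∈ 𝒟, MeasurableSet Q)
    (h𝒟fin : ∀ Q ∈ 𝒟, μ Q < ⊤)
    (h𝒟nested : ∀ P ∈ 𝒟, ∀ Q ∈ 𝒟, P ⊆ Q ∨ Q ⊆ P ∨ Disjoint P Q)
    (S : Set (Set α)) (hS : S ⊆ 𝒟) (hScount : S.Countable)
    (E : Set α → Set α)
    (hE : ∀ Q ∈ S, E Q ⊆ Q ∧ MeasurableSet (E Q) ∧ ENNReal.ofReal η * μ Q ≤ μ (E Q))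
    (hdisj : S.Pairwise fun P Q => Disjoint (E P) (E Q)) :
    ∃ c a : ℝ, 0 < c ∧ 0 < a ∧ ∀ Q ∈ 𝒟, ∀ t : ℝ, 0 < t →
      μ {x ∈ Q | ENNReal.ofReal t <
          ∑' P : {P : Set α // P ∈ S ∧ P ⊆ Q},
            (P : Set α).indicator (fun _ => (1 : ENNReal)) x} ≤
        ENNReal.ofReal (c * Real.exp (-a * t)) * μ Q :=
  stmt_19_general μ η hη 𝒟 h𝒟meas h𝒟nested S hS hScount E hE hdisj
end
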